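/- Let n ≥ 1, ν a partition of length at most n, and T ∈ SST_{2n}(ν). Then suc(T) = T if and only if T is symplectic, i.e., T(k,1) ≥ 2k−1 for all k ∈ [1,ℓ(ν)]. -/

import Mathlib

/-- `part lam i` : the `i`-th part (1-indexed) of the partition `lam`,
with `lam_i = 0` for `i > ℓ(lam)`. -/
def part (lam : List ℕ) (i : ℕ) : ℕ := lam.getD (i - 1) 0

/-- A partition: a weakly decreasing finite sequence of positive integers. -/
def IsPartition (lam : List ℕ) : Prop :=
  lam.Pairwise (· ≥ ·) ∧ ∀ x ∈ lam, 0 < x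

/-- `remAux` computes the set of removable entries of a strictly increasing
sequence, given as a list in *reversed* order (so the head is the last entry). -/
def remAux : List ℕ → Finset ℕ
  | [] => ∅
  | [_] => ∅
  | b :: a :: rest =>
    if Even b ∧ a + 1 = b ∧ b + (remAux rest).card + 1 < 2 * (rest.length + 2) then
      insert a (insert b (remAux rest))
    else remAux (a :: rest)

/-- `remSet 𝐚` : the set `Rem(𝐚)` of removable entries of the strictly
increasing sequence `𝐚 = (a_1, …, a_l)` (given in its natural order). -/
def remSet (l : List ℕ) : Finset ℕ := remAux l.reverse

/-- `redSeq 𝐚` : the reduction `red(𝐚)`, i.e. `𝐚` with the removable entries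
removed. -/
def redSeq (l : List ℕ) : List ℕ := l.filter (fun x => decide (x ∉ remSet l))

/-!  We represent a semistandard tableau by its list of columns (left to
right), each column being the list of its entries read from top to bottom. -/

/-- Column insertion `w → T` of `w` into the tableau `T` (given as a list of
columns): `w` is inserted into the first column, bumping the smallest entry
`≥ w` into the next column, and so on; the last bumped entry is placed at the
bottom of the first column that accommodates it. -/
def colInsert (w : ℕ) : List (List ℕ) → List (List ℕ)
  | [] => [[w]]
  | c :: rest =>
    match c.dropWhile (fun y => decide (y < w)) with
    | [] => (c ++ [w]) :: rest
    | x :: c₂ => (c.takeWhile (fun y => decide (y < w)) ++ w :: c₂) :: colInsert x rest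

/-- Insert the entries of the column `b = (b_1, …, b_k)` (top to bottom)
successively into `T`; this is the plactic product `b * T`. -/
def insertCol (b : List ℕ) (T : List (List ℕ)) : List (List ℕ) :=
  b.foldl (fun t w => colInsert w t) T

/-- The successor map: `suc T = red(𝐚) * T'`, where `𝐚` is the first column
of `T` and `T'` consists of the remaining columns. -/
def suc : List (List ℕ) → List (List ℕ)
  | [] => []
  | c :: rest => insertCol (redSeq c) rest

/-- `rowLen T i` : the length `λ_i` of the `i`-th row of the tableau `T`,
i.e. the number of columns of length `≥ i`. -/
def rowLen (T : List (List ℕ)) (i : ℕ) : ℕ :=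
  T.countP (fun c => decide (i ≤ c.length))

/-- Validity of the column representation of a semistandard tableau with
entries in `[1, m]`: columns are nonempty and strictly increasing (top to
bottom) with entries in `[1, m]`, column lengths weakly decrease from left to
right, and rows weakly increase from left to right. -/
def IsTableau (m : ℕ) (T : List (List ℕ)) : Prop :=
  (∀ c ∈ T, c ≠ []) ∧
  (∀ c ∈ T, c.Chain' (· < ·)) ∧
  (∀ c ∈ T, ∀ x ∈ c, 1 ≤ x ∧ x ≤ m) ∧
  T.Chain' (fun c c' => c'.length ≤ c.length ∧
    ∀ r < c'.length, c.getD r 0 ≤ c'.getD r 0)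

/-- `T` has shape `lam`. -/
def hasShape (T : List (List ℕ)) (lam : List ℕ) : Prop :=
  ∀ i, 1 ≤ i → rowLen T i = part lam i

/-- `T` is symplectic: the entry in the `k`-th row of the first column is
at least `2k - 1`. -/
def IsSymplectic (T : List (List ℕ)) : Prop :=
  ∀ k, 1 ≤ k → k ≤ (T.headD []).length → 2 * k - 1 ≤ (T.headD []).getD (k - 1) 0


/-!
If the first column `a` of `T` satisfies `a_k ≥ 2k - 1`, the recursion defining `Rem(a)` never
finds a removable pair, so `red(a) = a`; and column-inserting a column of a tableau into the
columns to its right just puts it back in front (each inserted entry bumps the entry beside it one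
column further right), so `suc T = T`.

Conversely, `Rem(a) = ∅` forces `a` to be symplectic, by induction on its length `l`: the prefix
`(a_1, …, a_{l-1})` is symplectic, so `a_l > a_{l-1} ≥ 2l - 3`, and `a_l = 2l - 2` would make
`(a_{l-1}, a_l)` removable. So if `T` is not symplectic, `red(a)` is shorter than `a`, and since
column insertion preserves the number of boxes, `suc T` has fewer boxes than `T`.
-/

def IsSymplecticColumn (l : List ℕ) : Prop :=
  ∀ k (hk : k < l.length), 2 * k + 1 ≤ l[k]

lemma isSymplecticColumn_nil : IsSymplecticColumn [] := fun _ hk => absurd hk (by simp)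

lemma isSymplecticColumn_append_singleton {l : List ℕ} {b : ℕ} :
    IsSymplecticColumn (l ++ [b]) ↔ IsSymplecticColumn l ∧ 2 * l.length + 1 ≤ b := by
  constructor
  · intro h
    refine ⟨fun k hk => ?_, by simpa using h l.length (by simp)⟩
    have := h k (by simp; omega)
    rwa [List.getElem_append_left hk] at this
  · rintro ⟨hl, hb⟩ k hk
    rw [List.length_append, List.length_singleton] at hk
    rcases Nat.lt_or_ge k l.length with hk' | hk'
    · simpa [List.getElem_append_left hk'] using hl k hk'
    · obtain rfl : k = l.length := by omega
      simpa using hb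

lemma isSymplectic_cons_iff {c : List ℕ} {rest : List (List ℕ)} :
    IsSymplectic (c :: rest) ↔ IsSymplecticColumn c := by
  simp only [IsSymplectic, List.headD_cons]
  constructor
  · intro h k hk
    have := h (k + 1) (by omega) (by omega)
    rw [Nat.add_sub_cancel, List.getD_eq_getElem _ _ hk] at this
    omega
  · intro h k hk₁ hk₂
    obtain ⟨j, rfl⟩ : ∃ j, k = j + 1 := ⟨k - 1, by omega⟩
    rw [Nat.add_sub_cancel, List.getD_eq_getElem _ _ (by omega)]
    have := h j (by omega)
    omega

lemma remAux_eq_empty_iff {r : List ℕ} (hr : r.IsChain (· > ·)) (hpos : ∀ x ∈ r, 0 < x) :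
    remAux r = ∅ ↔ IsSymplecticColumn r.reverse := by
  induction r using remAux.induct with
  | case1 => simp [remAux, isSymplecticColumn_nil]
  | case2 a =>
    rw [remAux, List.reverse_singleton, ← List.nil_append [a], isSymplecticColumn_append_singleton]
    simpa [isSymplecticColumn_nil, Nat.one_le_iff_ne_zero] using (hpos a (by simp)).ne'
  | case3 b a rest hrem _ =>
    rw [remAux, if_pos hrem, List.reverse_cons, isSymplecticColumn_append_singleton,
      List.length_reverse, List.length_cons]
    exact iff_of_false (Finset.insert_ne_empty _ _) fun h => by omega
  | case4 b a rest hrem ihrest ih =>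
    have hab : a < b := (List.isChain_cons_cons.mp hr).1
    rw [remAux, if_neg hrem, ih hr.tail (fun x hx => hpos x (List.mem_cons_of_mem b hx)),
      List.reverse_cons (a := b), isSymplecticColumn_append_singleton, List.length_reverse]
    refine ⟨fun h => ⟨h, ?_⟩, And.left⟩
    rw [List.reverse_cons, isSymplecticColumn_append_singleton, List.length_reverse] at h
    have hrest : remAux rest = ∅ := (ihrest (List.isChain_cons_cons.mp hr).2.tail
      (fun x hx => hpos x (by simp [hx]))).mpr h.1
    rw [hrest, Finset.card_empty] at hrem
    by_contra! hb
    rw [List.length_cons] at hb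
    exact hrem ⟨⟨rest.length + 1, by omega⟩, by omega, by omega⟩

lemma mem_of_mem_remAux {r : List ℕ} {x : ℕ} (hx : x ∈ remAux r) : x ∈ r := by
  induction r using remAux.induct with
  | case1 | case2 => simp [remAux] at hx
  | case3 b a rest hrem ih =>
    rw [remAux, if_pos hrem] at hx
    simp only [Finset.mem_insert] at hx
    rcases hx with rfl | rfl | hx
    · exact List.mem_cons_of_mem b List.mem_cons_self
    · exact List.mem_cons_self
    · exact List.mem_cons_of_mem b (List.mem_cons_of_mem a (ih hx))
  | case4 b a rest hrem _ ih =>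
    rw [remAux, if_neg hrem] at hx
    exact List.mem_cons_of_mem b (ih hx)

lemma remSet_eq_empty_iff {c : List ℕ} (hc : c.IsChain (· < ·)) (hpos : ∀ x ∈ c, 0 < x) :
    remSet c = ∅ ↔ IsSymplecticColumn c := by
  rw [remSet, remAux_eq_empty_iff (List.isChain_reverse.mpr hc)
    (fun x hx => hpos x (List.mem_reverse.mp hx)), List.reverse_reverse]

lemma redSeq_eq_self_iff {c : List ℕ} : redSeq c = c ↔ remSet c = ∅ := by
  rw [redSeq, List.filter_eq_self, Finset.eq_empty_iff_forall_notMem]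
  refine ⟨fun h x hx => ?_, fun h x _ => by simp [h x]⟩
  simpa [hx] using h x (List.mem_reverse.mp (mem_of_mem_remAux hx))

lemma insertCol_cons (w : ℕ) (b : List ℕ) (T : List (List ℕ)) :
    insertCol (w :: b) T = insertCol b (colInsert w T) := rfl

lemma colInsert_of_forall_lt {w : ℕ} {p : List ℕ} (hp : ∀ y ∈ p, y < w) (R : List (List ℕ)) :
    colInsert w (p :: R) = (p ++ [w]) :: R := by
  rw [colInsert, List.dropWhile_eq_nil_iff.mpr (by simpa using hp)]

lemma colInsert_append_cons {w x : ℕ} {p : List ℕ} (hp : ∀ y ∈ p, y < w) (hwx : w ≤ x)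
    (c : List ℕ) (R : List (List ℕ)) :
    colInsert w ((p ++ x :: c) :: R) = (p ++ w :: c) :: colInsert x R := by
  have hp' : ∀ y ∈ p, decide (y < w) = true := by simpa using hp
  have hdrop : (p ++ x :: c).dropWhile (fun y => decide (y < w)) = x :: c := by
    rw [List.dropWhile_append, List.dropWhile_eq_nil_iff.mpr hp']
    simp [hwx]
  have htake : (p ++ x :: c).takeWhile (fun y => decide (y < w)) = p := by
    rw [List.takeWhile_append, List.takeWhile_eq_self_iff.mpr hp']
    simp [hwx]
  rw [colInsert, hdrop, htake]

lemma insertCol_append {b : List ℕ} :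
    ∀ {p c : List ℕ} (R : List (List ℕ)), (p ++ b).Pairwise (· < ·) → c.length ≤ b.length →
      (∀ i < c.length, b.getD i 0 ≤ c.getD i 0) →
      insertCol b ((p ++ c) :: R) = (p ++ b) :: insertCol c R := by
  induction b with
  | nil =>
    intro p c R _ hlen _
    obtain rfl : c = [] := List.eq_nil_of_length_eq_zero (by simpa using hlen)
    rfl
  | cons w b ih =>
    intro p c R hb hlen hle
    have hpw : ∀ y ∈ p, y < w := fun y hy => (List.pairwise_append.mp hb).2.2 y hy w (by simp)
    have hb' : ((p ++ [w]) ++ b).Pairwise (· < ·) := by simpa using hb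
    cases c with
    | nil =>
      rw [List.append_nil, insertCol_cons, colInsert_of_forall_lt hpw,
        ← List.append_nil (p ++ [w]), ih R hb' (by simp) (by simp)]
      simp [insertCol]
    | cons x c =>
      have hwx : w ≤ x := by simpa using hle 0 (by simp)
      rw [insertCol_cons, colInsert_append_cons hpw hwx,
        show p ++ w :: c = (p ++ [w]) ++ c by simp, ih _ hb' (by simpa using hlen)
        (fun i hi => by simpa using hle (i + 1) (by simpa using hi))]
      simp [insertCol_cons]

lemma insertCol_nil {b : List ℕ} (hb : b.IsChain (· < ·)) (hne : b ≠ []) :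
    insertCol b [] = [b] := by
  obtain ⟨w, b, rfl⟩ := List.exists_cons_of_ne_nil hne
  have hempty : colInsert w [] = colInsert w [[]] := rfl
  rw [insertCol_cons, hempty, ← insertCol_cons, ← List.nil_append [], insertCol_append [] (by
    simpa using List.isChain_iff_pairwise.mp hb) (by simp) (by simp)]
  rfl

lemma insertCol_eq_cons {c : List ℕ} {rest : List (List ℕ)} (hne : ∀ d ∈ c :: rest, d ≠ [])
    (hcol : ∀ d ∈ c :: rest, d.IsChain (· < ·))
    (hrow : (c :: rest).IsChain fun d d' => d'.length ≤ d.length ∧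
      ∀ r < d'.length, d.getD r 0 ≤ d'.getD r 0) :
    insertCol c rest = c :: rest := by
  induction rest generalizing c with
  | nil => exact insertCol_nil (hcol c (by simp)) (hne c (by simp))
  | cons c' rest ih =>
    obtain ⟨⟨hlen, hle⟩, hrow'⟩ := List.isChain_cons_cons.mp hrow
    rw [← List.nil_append c', insertCol_append (p := []) rest
      (List.isChain_iff_pairwise.mp (hcol c (by simp))) hlen hle, List.nil_append, List.nil_append,
      ih (fun d hd => hne d (by simp [hd])) (fun d hd => hcol d (by simp [hd])) hrow']

lemma length_flatten_colInsert (w : ℕ) (T : List (List ℕ)) :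
    (colInsert w T).flatten.length = T.flatten.length + 1 := by
  induction T generalizing w with
  | nil => rfl
  | cons c rest ih =>
    have hsplit := congrArg List.length
      (List.takeWhile_append_dropWhile (p := fun y => decide (y < w)) (l := c))
    rw [colInsert]
    split
    next =>
      simp only [List.flatten_cons, List.length_append, List.length_cons, List.length_nil]
      omega
    next x c₂ hdrop =>
      rw [hdrop] at hsplit
      simp only [List.flatten_cons, List.length_append, List.length_cons, ih] at hsplit ⊢
      omega

lemma length_flatten_insertCol (b : List ℕ) (T : List (List ℕ)) :
    (insertCol b T).flatten.length = T.flatten.length + b.length := by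
  induction b generalizing T with
  | nil => rfl
  | cons w b ih =>
    rw [insertCol_cons, ih, length_flatten_colInsert, List.length_cons]
    omega

lemma suc_cons_eq_self_iff {c : List ℕ} {rest : List (List ℕ)} (hne : ∀ d ∈ c :: rest, d ≠ [])
    (hcol : ∀ d ∈ c :: rest, d.IsChain (· < ·))
    (hrow : (c :: rest).IsChain fun d d' => d'.length ≤ d.length ∧
      ∀ r < d'.length, d.getD r 0 ≤ d'.getD r 0) :
    suc (c :: rest) = c :: rest ↔ redSeq c = c := by
  refine ⟨fun hfix => List.filter_sublist.eq_of_length ?_, fun hred => ?_⟩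
  · have hsize := congrArg (fun T => T.flatten.length) hfix
    simp only [suc, redSeq, length_flatten_insertCol, List.flatten_cons,
      List.length_append] at hsize
    omega
  · rw [suc, hred, insertCol_eq_cons hne hcol hrow]

theorem stmt19_general (n : ℕ)
    (T : List (List ℕ)) (hT : IsTableau (2 * n) T) :
    suc T = T ↔ IsSymplectic T := by
  obtain ⟨hne, hcol, hbd, hrow⟩ := hT
  cases T with
  | nil => exact iff_of_true rfl fun k hk₁ hk₂ => by simp at hk₂; omega
  | cons c rest =>
    rw [suc_cons_eq_self_iff hne hcol hrow, redSeq_eq_self_iff,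
      remSet_eq_empty_iff (hcol c (by simp)) (fun x hx => (hbd c (by simp) x hx).1),
      isSymplectic_cons_iff]

theorem stmt19 (n : ℕ) (hn : 1 ≤ n) (nu : List ℕ)
    (hnu : IsPartition nu) (hlen : nu.length ≤ n)
    (T : List (List ℕ)) (hT : IsTableau (2 * n) T) (hsh : hasShape T nu) :
    suc T = T ↔ IsSymplectic T :=
  stmt19_general n T hT
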